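/- arXiv:2211.13741 — 5 statements merged into one kernel-verified Lean document; each statement's English description precedes it below -/
import Mathlib

section
/- Let M be an abelian group and let F, G, H : (ℤ/2ℤ)^n → M. If the number of triples (x,y,z) ∈ ((ℤ/2ℤ)^n)^3 with x + y + z = 0 and F(x) + G(y) + H(z) = 0 is at least η · 4^n, then the number of additive quadruples of F is at least η^4 · 2^{3n}. -/
/-!
The additive quadruples of `F` are those of its graph `Γ_F ⊆ V × M`, so they number `E[Γ_F]`,
and the triples of the hypothesis are the solutions of `a + b + c = 0` with `a ∈ Γ_F`, `b ∈ Γ_G`,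
`c ∈ Γ_H`. Cauchy–Schwarz over the value of `a + b` bounds their number `T` by
`T² ≤ |V| · E[Γ_F, Γ_G]`, Cauchy–Schwarz over the value of `a₁ - a₂ = b₂ - b₁` gives
`E[Γ_F, Γ_G]² ≤ E[Γ_F] · E[Γ_G]`, and trivially `E[Γ_G] ≤ |V|³`. Hence `T⁴ ≤ |V|⁵ · E[Γ_F]`,
in any finite abelian group `V`.
-/

open Finset
open scoped Pointwise Combinatorics.Additive

namespace Finset

section Coincidences

variable {α β γ : Type*} [DecidableEq γ]

lemma card_filter_eq_eq_sum_mul (s : Finset α) (t : Finset β) (f : α → γ) (g : β → γ)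
    {u : Finset γ} (hu : s.image f ⊆ u) :
    #{x ∈ s ×ˢ t | f x.1 = g x.2} = ∑ c ∈ u, #{a ∈ s | f a = c} * #{b ∈ t | g b = c} := by
  rw [card_eq_sum_card_fiberwise (f := fun x => f x.1) (t := u)
    (fun x hx => hu (mem_image_of_mem f (mem_product.1 (mem_filter.1 hx).1).1))]
  refine sum_congr rfl fun c _ => ?_
  rw [filter_filter, ← card_product]
  congr 1
  ext x
  simp only [mem_filter, mem_product]
  grind

lemma sq_card_filter_eq_le (s : Finset α) (t : Finset β) (f : α → γ) (g : β → γ) :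
    #{x ∈ s ×ˢ t | f x.1 = g x.2} ^ 2 ≤
      #{x ∈ s ×ˢ s | f x.1 = f x.2} * #{x ∈ t ×ˢ t | g x.1 = g x.2} := by
  rw [card_filter_eq_eq_sum_mul s t f g (subset_union_left (s₂ := t.image g)),
    card_filter_eq_eq_sum_mul s s f f (subset_union_left (s₂ := t.image g)),
    card_filter_eq_eq_sum_mul t t g g (subset_union_right (s₁ := s.image f))]
  simpa only [sq] using sum_mul_sq_le_sq_mul_sq _ _ _

end Coincidences

variable {α : Type*} [DecidableEq α]

lemma addEnergy_le_card_sq_mul_card [Add α] [IsLeftCancelAdd α] (s t : Finset α) :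
    E[s, t] ≤ #s ^ 2 * #t := by
  rw [sq, ← card_product, ← card_product]
  refine card_le_card_of_injOn (fun x => (x.1, x.2.1)) (fun x hx => ?_) fun x hx y hy hxy => ?_
  · simp only [coe_filter, mem_product] at hx
    simp [hx.1.1, hx.1.2.1]
  · simp only [coe_filter, Set.mem_ofPred_eq] at hx hy
    obtain ⟨⟨x₁, x₂⟩, x₃, x₄⟩ := x
    obtain ⟨⟨y₁, y₂⟩, y₃, y₄⟩ := y
    simp only [Prod.mk.injEq] at hxy ⊢
    obtain ⟨⟨rfl, rfl⟩, rfl⟩ := hxy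
    exact ⟨⟨rfl, rfl⟩, rfl, add_left_cancel (hx.2.symm.trans hy.2)⟩

section AddCommGroup

variable [AddCommGroup α]

lemma addEnergy_eq_card_filter_sub_eq (s t : Finset α) :
    E[s, t] = #{x ∈ (s ×ˢ s) ×ˢ (t ×ˢ t) | x.1.1 - x.1.2 = x.2.2 - x.2.1} := by
  unfold addEnergy
  congr 1
  refine filter_congr fun x _ => ?_
  rw [sub_eq_sub_iff_add_eq_add, add_comm x.2.2]

lemma addEnergy_sq_le_addEnergy_mul_addEnergy (s t : Finset α) : E[s, t] ^ 2 ≤ E[s] * E[t] := by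
  have hs : E[s] = #{x ∈ (s ×ˢ s) ×ˢ (s ×ˢ s) | x.1.1 - x.1.2 = x.2.1 - x.2.2} := by
    rw [addEnergy_eq_card_filter_sub_eq]
    refine card_equiv ((Equiv.refl _).prodCongr (Equiv.prodComm _ _)) fun x => ?_
    simp [and_comm]
  have ht : E[t] = #{x ∈ (t ×ˢ t) ×ˢ (t ×ˢ t) | x.1.2 - x.1.1 = x.2.2 - x.2.1} := by
    rw [addEnergy_eq_card_filter_sub_eq]
    refine card_equiv ((Equiv.prodComm _ _).prodCongr (Equiv.refl _)) fun x => ?_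
    simp [and_comm]
  rw [hs, ht, addEnergy_eq_card_filter_sub_eq]
  exact sq_card_filter_eq_le _ _ (fun a : α × α => a.1 - a.2) (fun b : α × α => b.2 - b.1)

lemma card_add_mem_pow_four_le (s t u : Finset α) :
    #{x ∈ s ×ˢ t | x.1 + x.2 ∈ u} ^ 4 ≤ #u ^ 2 * #t ^ 3 * E[s] :=
  calc #{x ∈ s ×ˢ t | x.1 + x.2 ∈ u} ^ 4
      = (#{x ∈ s ×ˢ t | x.1 + x.2 ∈ u} ^ 2) ^ 2 := by ring
    _ ≤ (#u * E[s, t]) ^ 2 := by gcongr; exact card_sq_le_card_mul_addEnergy s t u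
    _ = #u ^ 2 * E[s, t] ^ 2 := mul_pow ..
    _ ≤ #u ^ 2 * (E[s] * E[t]) := by gcongr; exact addEnergy_sq_le_addEnergy_mul_addEnergy s t
    _ ≤ #u ^ 2 * (E[s] * #t ^ 3) := by
      gcongr; simpa [pow_succ] using addEnergy_le_card_sq_mul_card t t
    _ = #u ^ 2 * #t ^ 3 * E[s] := by ring

end AddCommGroup

end Finset

section Graph

variable {V M : Type*} [Fintype V]

def graphFinset (f : V → M) : Finset (V × M) :=
  univ.map ⟨fun x => (x, f x), fun _ _ h => congrArg Prod.fst h⟩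

@[simp]
lemma mem_graphFinset {f : V → M} {p : V × M} : p ∈ graphFinset f ↔ f p.1 = p.2 := by
  constructor
  · intro hp
    obtain ⟨x, -, rfl⟩ := mem_map.1 hp
    rfl
  · intro hp
    exact mem_map.2 ⟨p.1, mem_univ _, Prod.ext rfl hp⟩

@[simp]
lemma card_graphFinset (f : V → M) : #(graphFinset f) = Fintype.card V := by
  simp [graphFinset]

variable [AddCommGroup V] [AddCommGroup M]

noncomputable def addQuadrupleCount (f : V → M) : ℕ :=
  Nat.card {q : V × V × V × V //
    q.1 + q.2.1 = q.2.2.1 + q.2.2.2 ∧ f q.1 + f q.2.1 = f q.2.2.1 + f q.2.2.2}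

noncomputable def zeroSumTripleCount (F G H : V → M) : ℕ :=
  Nat.card {p : V × V × V // p.1 + p.2.1 + p.2.2 = 0 ∧ F p.1 + G p.2.1 + H p.2.2 = 0}

section DecidableEq

variable [DecidableEq V] [DecidableEq M]

lemma addEnergy_graphFinset (f : V → M) : E[graphFinset f] = addQuadrupleCount f := by
  rw [addQuadrupleCount, Nat.card_eq_fintype_card, Fintype.card_subtype]
  symm
  refine card_nbij' (fun q => (((q.1, f q.1), (q.2.2.1, f q.2.2.1)),
      ((q.2.1, f q.2.1), (q.2.2.2, f q.2.2.2))))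
    (fun x => (x.1.1.1, x.2.1.1, x.1.2.1, x.2.2.1)) ?_ ?_ ?_ ?_
  · intro q hq
    simp only [coe_filter, mem_univ, true_and, Set.mem_ofPred_eq] at hq
    simp [Prod.ext_iff, hq.1, hq.2]
  · rintro ⟨⟨⟨x₁, m₁⟩, x₂, m₂⟩, ⟨x₃, m₃⟩, x₄, m₄⟩ hx
    simp only [coe_filter, mem_product, mem_graphFinset, Set.mem_ofPred_eq] at hx
    obtain ⟨⟨⟨rfl, rfl⟩, rfl, rfl⟩, h⟩ := hx
    simp_all [Prod.ext_iff]
  · intro q _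
    rfl
  · rintro ⟨⟨⟨x₁, m₁⟩, x₂, m₂⟩, ⟨x₃, m₃⟩, x₄, m₄⟩ hx
    simp only [coe_filter, mem_product, mem_graphFinset, Set.mem_ofPred_eq] at hx
    obtain ⟨⟨⟨rfl, rfl⟩, rfl, rfl⟩, -⟩ := hx
    rfl

lemma zeroSumTripleCount_eq_card (F G H : V → M) :
    zeroSumTripleCount F G H =
      #{x ∈ graphFinset F ×ˢ graphFinset G | x.1 + x.2 ∈ -graphFinset H} := by
  rw [zeroSumTripleCount, Nat.card_eq_fintype_card, Fintype.card_subtype]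
  refine card_nbij' (fun p => ((p.1, F p.1), (p.2.1, G p.2.1)))
    (fun x => (x.1.1, x.2.1, -(x.1.1 + x.2.1))) ?_ ?_ ?_ ?_
  · rintro ⟨x, y, z⟩ hp
    simp only [coe_filter, mem_univ, true_and, Set.mem_ofPred_eq] at hp
    obtain ⟨hz, hH⟩ := hp
    obtain rfl := eq_neg_of_add_eq_zero_right hz
    simp only [coe_filter, mem_product, mem_graphFinset, mem_neg', Set.mem_ofPred_eq,
      Prod.fst_add, Prod.snd_add, Prod.fst_neg, Prod.snd_neg, and_self, true_and]
    exact eq_neg_of_add_eq_zero_right hH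
  · rintro ⟨⟨x, m⟩, y, m'⟩ hx
    simp only [coe_filter, mem_product, mem_graphFinset, mem_neg', Set.mem_ofPred_eq] at hx
    obtain ⟨⟨rfl, rfl⟩, hH⟩ := hx
    simp only [coe_filter, mem_univ, true_and, Set.mem_ofPred_eq, add_neg_cancel]
    simp only [Prod.fst_add, Prod.snd_add, Prod.fst_neg, Prod.snd_neg] at hH
    rw [hH, add_neg_cancel]
  · rintro ⟨x, y, z⟩ hp
    simp only [coe_filter, mem_univ, true_and, Set.mem_ofPred_eq] at hp
    obtain rfl := eq_neg_of_add_eq_zero_right hp.1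
    rfl
  · rintro ⟨⟨x, m⟩, y, m'⟩ hx
    simp only [coe_filter, mem_product, mem_graphFinset, Set.mem_ofPred_eq] at hx
    obtain ⟨⟨rfl, rfl⟩, -⟩ := hx
    rfl

end DecidableEq

lemma zeroSumTripleCount_pow_four_le (F G H : V → M) :
    zeroSumTripleCount F G H ^ 4 ≤ Fintype.card V ^ 5 * addQuadrupleCount F := by
  classical
  calc zeroSumTripleCount F G H ^ 4
      ≤ #(-graphFinset H) ^ 2 * #(graphFinset G) ^ 3 * E[graphFinset F] := by
        rw [zeroSumTripleCount_eq_card]; exact card_add_mem_pow_four_le _ _ _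
    _ = Fintype.card V ^ 5 * addQuadrupleCount F := by
        rw [card_neg, card_graphFinset, card_graphFinset, addEnergy_graphFinset]; ring

theorem le_addQuadrupleCount_of_le_zeroSumTripleCount (F G H : V → M) {η : ℝ} (hη : 0 ≤ η)
    (hcount : η * Fintype.card V ^ 2 ≤ zeroSumTripleCount F G H) :
    η ^ 4 * Fintype.card V ^ 3 ≤ addQuadrupleCount F := by
  have hV : (0 : ℝ) < Fintype.card V := by exact_mod_cast Fintype.card_pos_iff.2 ⟨0⟩
  have key : (zeroSumTripleCount F G H : ℝ) ^ 4 ≤ Fintype.card V ^ 5 * addQuadrupleCount F := by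
    exact_mod_cast zeroSumTripleCount_pow_four_le F G H
  refine le_of_mul_le_mul_right ?_ (pow_pos hV 5)
  calc η ^ 4 * Fintype.card V ^ 3 * Fintype.card V ^ 5 = (η * Fintype.card V ^ 2) ^ 4 := by ring
    _ ≤ (zeroSumTripleCount F G H : ℝ) ^ 4 := by gcongr
    _ ≤ Fintype.card V ^ 5 * addQuadrupleCount F := key
    _ = addQuadrupleCount F * Fintype.card V ^ 5 := mul_comm ..

end Graph

/-- If `F, G, H : (ℤ/2ℤ)^n → M` satisfy `F(x) + G(y) + H(z) = 0` on at least `η · 4^n` of the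
triples with `x + y + z = 0`, then `F` has at least `η⁴ · 2^(3n)` additive quadruples, i.e.
tuples `(x,y,u,v)` with `x + y = u + v` and `F(x) + F(y) = F(u) + F(v)`. -/
theorem test_to_additive_quadruples {n : ℕ} {M : Type*} [AddCommGroup M]
    (F G H : (Fin n → ZMod 2) → M) (η : ℝ) (hη : 0 ≤ η)
    (hcount : η * 4 ^ n ≤
      (Nat.card {p : (Fin n → ZMod 2) × (Fin n → ZMod 2) × (Fin n → ZMod 2) //
        p.1 + p.2.1 + p.2.2 = 0 ∧ F p.1 + G p.2.1 + H p.2.2 = 0} : ℝ)) :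
    η ^ 4 * 2 ^ (3 * n) ≤
      (Nat.card {q : (Fin n → ZMod 2) × (Fin n → ZMod 2) × (Fin n → ZMod 2) × (Fin n → ZMod 2) //
        q.1 + q.2.1 = q.2.2.1 + q.2.2.2 ∧
          F q.1 + F q.2.1 = F q.2.2.1 + F q.2.2.2} : ℝ) := by
  have hV : (Fintype.card (Fin n → ZMod 2) : ℝ) = 2 ^ n := by simp
  have h4 : (4 : ℝ) ^ n = (2 ^ n) ^ 2 := by rw [← pow_mul, mul_comm, pow_mul]; norm_num
  have h3 : (2 : ℝ) ^ (3 * n) = (2 ^ n) ^ 3 := by rw [← pow_mul, mul_comm]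
  rw [h4, ← hV] at hcount
  rw [h3, ← hV]
  exact le_addQuadrupleCount_of_le_zeroSumTripleCount F G H hη hcount
end

section
/- Let M be an abelian group and let F, G, H : (ℤ/2ℤ)^n → M. If the number of triples (x,y,z) ∈ ((ℤ/2ℤ)^n)^3 with x + y + z = 0 and F(x) + G(y) + H(z) = 0 is at least η · 4^n, then for x, u, u' chosen independently and uniformly from (ℤ/2ℤ)^n, the probability that F(x) − F(x + u + u') = H(u') − H(u) is at least η². -/
/-! Group the solutions of `x + y + z = 0`, `F x + G y + H z = 0` by `y`: if `A y` is the set of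
admissible `x`, Cauchy–Schwarz gives `(∑ #A y)² ≤ |V| ∑ #A y²`. Two solutions `x, x' ∈ A y`
yield, with `u = -(x + y)` and `u' = -(x' + y)`, a triple `(x, u, u')` with `x + u - u' = x'` and
`F x - F x' = H u' - H u`, and this triple determines `(y, x, x')`. -/

open Finset

section

variable {V M : Type*} [AddCommGroup V] [Fintype V] [AddCommGroup M] [DecidableEq M]

def solutionFiber (F G H : V → M) (y : V) : Finset V :=
  {x | F x + G y + H (-(x + y)) = 0}

lemma card_solutions_eq_sum_card_solutionFiber (F G H : V → M) :
    Nat.card {p : V × V × V // p.1 + p.2.1 + p.2.2 = 0 ∧ F p.1 + G p.2.1 + H p.2.2 = 0} =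
      ∑ y, #(solutionFiber F G H y) := by
  let e : {p : V × V × V // p.1 + p.2.1 + p.2.2 = 0 ∧ F p.1 + G p.2.1 + H p.2.2 = 0} ≃
      Σ y, {x // x ∈ solutionFiber F G H y} :=
    { toFun := fun p => ⟨p.1.2.1, p.1.1, by
        obtain ⟨⟨x, y, z⟩, hsum, hsol⟩ := p
        obtain rfl : z = -(x + y) := eq_neg_of_add_eq_zero_right hsum
        simpa [solutionFiber] using hsol⟩
      invFun := fun q => ⟨(q.2.1, q.1, -(q.2.1 + q.1)), add_neg_cancel _, by
        simpa [solutionFiber] using q.2.2⟩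
      left_inv := by
        rintro ⟨⟨x, y, z⟩, hsum, hsol⟩
        obtain rfl : z = -(x + y) := eq_neg_of_add_eq_zero_right hsum
        rfl
      right_inv := by rintro ⟨y, x, hx⟩; rfl }
  rw [Nat.card_congr e, Nat.card_sigma]
  simp

lemma sum_card_solutionFiber_sq_le (F G H : V → M) :
    ∑ y, #(solutionFiber F G H y) ^ 2 ≤
      Nat.card {t : V × V × V // F t.1 - F (t.1 + t.2.1 - t.2.2) = H t.2.2 - H t.2.1} := by
  rw [Nat.card_eq_fintype_card, Fintype.card_subtype]
  simp_rw [sq, ← card_product]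
  rw [← card_sigma]
  refine card_le_card_of_injOn (fun q => (q.2.1, -(q.2.1 + q.1), -(q.2.2 + q.1))) ?_ ?_
  · rintro ⟨y, x, x'⟩ hq
    simp only [mem_coe, mem_sigma, mem_univ, mem_product, solutionFiber, mem_filter, true_and] at hq
    simp only [coe_filter, mem_univ, true_and, Set.mem_ofPred_eq]
    obtain ⟨hx, hx'⟩ := hq
    have hsum : x + -(x + y) - -(x' + y) = x' := by abel
    calc F x - F (x + -(x + y) - -(x' + y))
        = (F x + G y + H (-(x + y))) - (F x' + G y + H (-(x' + y)))
            + (H (-(x' + y)) - H (-(x + y))) := by rw [hsum]; abel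
      _ = H (-(x' + y)) - H (-(x + y)) := by rw [hx, hx']; abel
  · rintro ⟨y, x, x'⟩ - ⟨z, w, w'⟩ - h
    simp only [Prod.mk.injEq, neg_inj] at h
    obtain ⟨rfl, hy, hx'⟩ := h
    obtain rfl := add_left_cancel hy
    obtain rfl := add_right_cancel hx'
    rfl

theorem sq_mul_card_pow_three_le_of_mul_card_sq_le (F G H : V → M) {η : ℝ} (hη : 0 ≤ η)
    (hcount : η * Fintype.card V ^ 2 ≤
      Nat.card {p : V × V × V // p.1 + p.2.1 + p.2.2 = 0 ∧ F p.1 + G p.2.1 + H p.2.2 = 0}) :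
    η ^ 2 * Fintype.card V ^ 3 ≤
      Nat.card {t : V × V × V // F t.1 - F (t.1 + t.2.1 - t.2.2) = H t.2.2 - H t.2.1} := by
  set T := Nat.card {t : V × V × V // F t.1 - F (t.1 + t.2.1 - t.2.2) = H t.2.2 - H t.2.1}
  set S := ∑ y, #(solutionFiber F G H y)
  rw [card_solutions_eq_sum_card_solutionFiber] at hcount
  have hCS : S ^ 2 ≤ Fintype.card V * T :=
    (sq_sum_le_card_mul_sum_sq ..).trans
      (Nat.mul_le_mul_left _ (sum_card_solutionFiber_sq_le F G H))
  have hN : (0 : ℝ) < Fintype.card V := by exact_mod_cast Fintype.card_pos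
  refine le_of_mul_le_mul_left ?_ hN
  calc (Fintype.card V : ℝ) * (η ^ 2 * Fintype.card V ^ 3) = (η * Fintype.card V ^ 2) ^ 2 := by
        ring
    _ ≤ (S : ℝ) ^ 2 := by gcongr
    _ ≤ Fintype.card V * T := by exact_mod_cast hCS

end

/-- If `F, G, H : (ℤ/2ℤ)^n → M` satisfy `F(x) + G(y) + H(z) = 0` on at least `η · 4^n` of the
triples with `x + y + z = 0`, then for `x, u, u'` uniform and independent the probability that
`F(x) − F(x + u + u') = H(u') − H(u)` is at least `η²` (i.e. the number of such triples
`(x,u,u')` is at least `η² · 8^n`). -/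
theorem test_to_one_cauchy_schwarz {n : ℕ} {M : Type*} [AddCommGroup M]
    (F G H : (Fin n → ZMod 2) → M) (η : ℝ) (hη : 0 ≤ η)
    (hcount : η * 4 ^ n ≤
      (Nat.card {p : (Fin n → ZMod 2) × (Fin n → ZMod 2) × (Fin n → ZMod 2) //
        p.1 + p.2.1 + p.2.2 = 0 ∧ F p.1 + G p.2.1 + H p.2.2 = 0} : ℝ)) :
    η ^ 2 * 8 ^ n ≤
      (Nat.card {t : (Fin n → ZMod 2) × (Fin n → ZMod 2) × (Fin n → ZMod 2) //
        F t.1 - F (t.1 + t.2.1 + t.2.2) = H t.2.2 - H t.2.1} : ℝ) := by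
  classical
  have hcard : (Fintype.card (Fin n → ZMod 2) : ℝ) = 2 ^ n := by simp
  have h4 : (4 : ℝ) ^ n = (2 ^ n) ^ 2 := by rw [← pow_mul, mul_comm, pow_mul]; norm_num
  have h8 : (8 : ℝ) ^ n = (2 ^ n) ^ 3 := by rw [← pow_mul, mul_comm, pow_mul]; norm_num
  rw [h4, ← hcard] at hcount
  rw [h8, ← hcard]
  simpa only [ZModModule.sub_eq_add] using sq_mul_card_pow_three_le_of_mul_card_sq_le F G H hη hcount
end

section
/- Let Γ' be a nonempty finite subset of (ℤ/2ℤ)^n × (ℤ/4ℤ)^n whose elements have pairwise distinct first coordinates (e.g., a subset of the graph of a function (ℤ/2ℤ)^n → (ℤ/4ℤ)^n). Let Y = {y ∈ (ℤ/4ℤ)^n : (0, y) ∈ 8Γ' − 8Γ'}. Then |Γ'| · |Y| ≤ |16Γ' − 16Γ'|. -/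
open Pointwise

/-- The `k`-fold sumset `kA = {a₁ + … + a_k : aᵢ ∈ A}` of a subset `A` of an abelian group. -/
def iterSumset {G : Type*} [AddCommMonoid G] (k : ℕ) (A : Set G) : Set G :=
  {s | ∃ f : Fin k → G, (∀ i, f i ∈ A) ∧ (∑ i, f i) = s}

/-!
Adding the elements `(0, y)` of `8Γ' − 8Γ'` to the elements of `Γ'` is injective, because the
first coordinate recovers the element of `Γ'`; this puts `|Γ'| · |Y|` distinct elements into
`9Γ' − 8Γ'`. Translating by `7γ₀ − 8γ₀` for some `γ₀ ∈ Γ'` embeds `9Γ' − 8Γ'` into `16Γ' − 16Γ'`.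
-/

lemma iterSumset_eq_nsmul {G : Type*} [AddCommMonoid G] (k : ℕ) (A : Set G) :
    iterSumset k A = k • A :=
  Set.ext fun _ => Set.mem_nsmul_iff_sum.symm

lemma natCard_nsmul_sub_nsmul_mono {G : Type*} [AddCommGroup G] {A : Set G} (hA : A.Finite)
    {a : G} (ha : a ∈ A) {k k' l l' : ℕ} (hk : k ≤ k') (hl : l ≤ l') :
    Nat.card ↥(k • A - l • A) ≤ Nat.card ↥(k' • A - l' • A) := by
  obtain ⟨i, rfl⟩ := Nat.exists_eq_add_of_le hk
  obtain ⟨j, rfl⟩ := Nat.exists_eq_add_of_le hl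
  have htranslate : (i • a - j • a) +ᵥ (k • A - l • A) ⊆ (k + i) • A - (l + j) • A := by
    rintro _ ⟨_, ⟨s, hs, t, ht, rfl⟩, rfl⟩
    refine ⟨s + i • a, ?_, t + j • a, ?_, by simp only [vadd_eq_add]; abel⟩
    · rw [add_nsmul]; exact Set.add_mem_add hs (Set.nsmul_mem_nsmul ha)
    · rw [add_nsmul]; exact Set.add_mem_add ht (Set.nsmul_mem_nsmul ha)
  have hfin : ((k + i) • A - (l + j) • A).Finite := by
    classical
    lift A to Finset G using hA
    exact_mod_cast ((k + i) • A - (l + j) • A).finite_toSet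
  calc Nat.card ↥(k • A - l • A) = Nat.card ↥((i • a - j • a) +ᵥ (k • A - l • A)) :=
        (Set.natCard_vadd_set _ _).symm
    _ ≤ _ := Nat.card_mono hfin htranslate

lemma natCard_add_singleton_zero_prod {H K : Type*} [AddZeroClass H] [Add K] [IsLeftCancelAdd K]
    {A : Set (H × K)} (hA : A.InjOn Prod.fst) (Y : Set K) :
    Nat.card ↥(A + ({0} : Set H) ×ˢ Y) = Nat.card A * Nat.card Y := by
  have hinj : (A ×ˢ Y).InjOn fun p => p.1 + ((0 : H), p.2) := by
    rintro ⟨a, y⟩ ⟨ha, -⟩ ⟨b, z⟩ ⟨hb, -⟩ h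
    have hab : a = b := hA ha hb (by simpa using congrArg Prod.fst h)
    subst hab
    simpa using congrArg Prod.snd h
  rw [Set.singleton_prod, ← Set.image2_add, Set.image2_image_right, ← Set.image_prod,
    Nat.card_image_of_injOn hinj, Nat.card_congr (Equiv.Set.prod A Y), Nat.card_prod]

/-- Let `Γ'` be a nonempty finite subset of `(ℤ/2ℤ)^n × (ℤ/4ℤ)^n` whose elements have pairwise
distinct first coordinates, and let `Y = {y : (0, y) ∈ 8Γ' − 8Γ'}`. Then
`|Γ'| · |Y| ≤ |16Γ' − 16Γ'|`. -/
theorem graph_sumset_growth {n : ℕ}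
    (Γ' : Finset ((Fin n → ZMod 2) × (Fin n → ZMod 4))) (hne : Γ'.Nonempty)
    (hinj : ∀ p ∈ Γ', ∀ q ∈ Γ', p.1 = q.1 → p = q) :
    Γ'.card * Nat.card {y : Fin n → ZMod 4 //
        ((0 : Fin n → ZMod 2), y) ∈
          iterSumset 8 (↑Γ' : Set ((Fin n → ZMod 2) × (Fin n → ZMod 4))) - iterSumset 8 (↑Γ' : Set ((Fin n → ZMod 2) × (Fin n → ZMod 4)))} ≤
      Nat.card (iterSumset 16 (↑Γ' : Set ((Fin n → ZMod 2) × (Fin n → ZMod 4))) - iterSumset 16 (↑Γ' : Set ((Fin n → ZMod 2) × (Fin n → ZMod 4))) :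
        Set ((Fin n → ZMod 2) × (Fin n → ZMod 4))) := by
  set A : Set ((Fin n → ZMod 2) × (Fin n → ZMod 4)) := ↑Γ'
  set Y := {y : Fin n → ZMod 4 | ((0 : Fin n → ZMod 2), y) ∈ iterSumset 8 A - iterSumset 8 A}
  obtain ⟨a, ha⟩ := hne
  have hY : A + ({0} : Set (Fin n → ZMod 2)) ×ˢ Y ⊆ 9 • A - 8 • A := by
    rw [succ_nsmul', add_sub_assoc, ← iterSumset_eq_nsmul]
    refine Set.add_subset_add_left ?_
    rintro ⟨x, y⟩ ⟨hx, hy⟩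
    obtain rfl : x = 0 := hx
    exact hy
  calc Γ'.card * Nat.card Y = Nat.card ↥(A + ({0} : Set (Fin n → ZMod 2)) ×ˢ Y) := by
        rw [natCard_add_singleton_zero_prod (fun p hp q hq => hinj p hp q hq),
          ← Nat.card_eq_finsetCard]
        rfl
    _ ≤ Nat.card ↥(9 • A - 8 • A) := Nat.card_mono (Set.toFinite _) hY
    _ ≤ Nat.card ↥(16 • A - 16 • A) :=
        natCard_nsmul_sub_nsmul_mono Γ'.finite_toSet ha (by norm_num) (by norm_num)
    _ = _ := by rw [iterSumset_eq_nsmul]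
end

section
/- Let Y ⊆ (ℤ/4ℤ)^n be a finite set and let t ∈ ℕ satisfy |Y ∖ {0}| < 2^t. Then there exist subsets I_1, …, I_t ⊆ {1,…,n} such that, setting W = {y ∈ (ℤ/4ℤ)^n : ∑_{j ∈ I_i} y_j = 0 in ℤ/4ℤ for all i = 1,…,t}, one has Y ∩ W ⊆ {0}. -/
/-!
If `y ≠ 0` has a nonzero coordinate `j₀`, toggling `j₀` in or out of `I` maps the subsets `I` with
`∑_{j ∈ I} y_j = 0` injectively to subsets with nonzero sum, so at most half of all subsets kill
`y`. Double counting then gives one subset `I` that kills at most half of a given finite set of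
nonzero vectors. Applying this `t` times, each time to the vectors killed by all subsets chosen so
far, halves their number at each step, so fewer than `2 ^ t` vectors end up with none left.
-/

open Finset

variable {ι M : Type*} [Fintype ι] [DecidableEq ι] [AddCommMonoid M] [DecidableEq M]

theorem two_mul_card_subsets_sum_eq_zero_le {y : ι → M} (hy : y ≠ 0) :
    2 * #{I : Finset ι | ∑ j ∈ I, y j = 0} ≤ 2 ^ Fintype.card ι := by
  obtain ⟨j₀, hj₀⟩ := Function.ne_iff.mp hy
  let toggle : Finset ι → Finset ι := fun I => if j₀ ∈ I then I.erase j₀ else insert j₀ I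
  have toggle_toggle : ∀ I, toggle (toggle I) = I := by
    intro I
    by_cases h : j₀ ∈ I
    · simp [toggle, h, insert_erase]
    · simp [toggle, h]
  have sum_toggle_ne_zero : ∀ I, ∑ j ∈ I, y j = 0 → ∑ j ∈ toggle I, y j ≠ 0 := by
    intro I hI hI'
    by_cases h : j₀ ∈ I
    · rw [← sum_erase_add I y h] at hI
      simp only [toggle, if_pos h] at hI'
      rw [hI', zero_add] at hI
      exact hj₀ hI
    · simp only [toggle, if_neg h, sum_insert h, hI, add_zero] at hI'
      exact hj₀ hI'
  have card_le : #{I : Finset ι | ∑ j ∈ I, y j = 0} ≤ #{I : Finset ι | ¬∑ j ∈ I, y j = 0} :=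
    card_le_card_of_injOn toggle
      (fun I hI => by simpa using sum_toggle_ne_zero I (by simpa using hI))
      (Function.LeftInverse.injective toggle_toggle).injOn
  have card_total := card_filter_add_card_filter_not (s := univ)
    (p := fun I : Finset ι => ∑ j ∈ I, y j = 0)
  rw [card_univ, Fintype.card_finset] at card_total
  omega

theorem exists_two_mul_card_filter_sum_eq_zero_le {S : Finset (ι → M)} (hS : 0 ∉ S) :
    ∃ I : Finset ι, 2 * #{y ∈ S | ∑ j ∈ I, y j = 0} ≤ #S := by
  by_contra! h
  have double_count : ∑ I : Finset ι, #{y ∈ S | ∑ j ∈ I, y j = 0} =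
      ∑ y ∈ S, #{I : Finset ι | ∑ j ∈ I, y j = 0} :=
    (sum_card_bipartiteAbove_eq_sum_card_bipartiteBelow
      (r := fun (y : ι → M) (I : Finset ι) => ∑ j ∈ I, y j = 0) (s := S) (t := univ)).symm
  have : ∑ _I : Finset ι, #S < ∑ _y ∈ S, 2 ^ Fintype.card ι := calc
    ∑ _I : Finset ι, #S < ∑ I : Finset ι, 2 * #{y ∈ S | ∑ j ∈ I, y j = 0} :=
      sum_lt_sum_of_nonempty univ_nonempty fun I _ => h I
    _ = ∑ y ∈ S, 2 * #{I : Finset ι | ∑ j ∈ I, y j = 0} := by rw [← mul_sum, double_count, mul_sum]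
    _ ≤ ∑ _y ∈ S, 2 ^ Fintype.card ι :=
      sum_le_sum fun y hy => two_mul_card_subsets_sum_eq_zero_le (ne_of_mem_of_not_mem hy hS)
  simp [Fintype.card_finset, mul_comm] at this

theorem exists_subsets_sum_ne_zero_of_card_lt (t : ℕ) {S : Finset (ι → M)} (hS : 0 ∉ S)
    (hcard : #S < 2 ^ t) : ∃ I : Fin t → Finset ι, ∀ y ∈ S, ∃ i, ∑ j ∈ I i, y j ≠ 0 := by
  induction t generalizing S with
  | zero => simp_all
  | succ t ih =>
    obtain ⟨I₀, hI₀⟩ := exists_two_mul_card_filter_sum_eq_zero_le hS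
    obtain ⟨I, hI⟩ := ih (S := {y ∈ S | ∑ j ∈ I₀, y j = 0})
      (fun h => hS (mem_filter.mp h).1) (by rw [pow_succ] at hcard; omega)
    refine ⟨Fin.cons I₀ I, fun y hy => ?_⟩
    by_cases hy₀ : ∑ j ∈ I₀, y j = 0
    · obtain ⟨i, hi⟩ := hI y (mem_filter.mpr ⟨hy, hy₀⟩)
      exact ⟨i.succ, by simpa using hi⟩
    · exact ⟨0, by simpa using hy₀⟩

/-- If `Y ⊆ (ℤ/4ℤ)^n` satisfies `|Y ∖ {0}| < 2^t`, then there are subsets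
`I₁, …, I_t ⊆ {1,…,n}` such that the subgroup
`W = {y : ∑_{j ∈ Iᵢ} y_j = 0 for all i}` satisfies `Y ∩ W ⊆ {0}`. -/
theorem subset_equations_avoiding_Y {n : ℕ} (Y : Set (Fin n → ZMod 4)) (t : ℕ)
    (hY : Nat.card ↥(Y \ {0}) < 2 ^ t) :
    ∃ I : Fin t → Finset (Fin n),
      Y ∩ {y : Fin n → ZMod 4 | ∀ i, (∑ j ∈ I i, y j) = 0} ⊆ {0} := by
  classical
  rw [Nat.card_eq_card_toFinset] at hY
  obtain ⟨I, hI⟩ := exists_subsets_sum_ne_zero_of_card_lt t (by simp) hY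
  refine ⟨I, fun y ⟨hyY, hyW⟩ => by_contra fun hy => ?_⟩
  obtain ⟨i, hi⟩ := hI y (Set.mem_toFinset.mpr ⟨hyY, hy⟩)
  exact hi (hyW i)
end

section
/- Let φ : (ℤ/2ℤ)^n → (ℤ/4ℤ)^n, let Γ' be a subset of the graph of φ (i.e., every element of Γ' has the form (x, φ(x))), let W be a subgroup of (ℤ/4ℤ)^n, and let Y = {y ∈ (ℤ/4ℤ)^n : (0, y) ∈ 8Γ' − 8Γ'}. Suppose Y ∩ W ⊆ {0}. Then for every a ∈ (ℤ/4ℤ)^n, letting A = {x ∈ (ℤ/2ℤ)^n : (x, φ(x)) ∈ Γ' and φ(x) ∈ a + W}, the restriction φ|_A is a Freiman homomorphism of order 8. -/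
open Pointwise

/-- `φ` restricted to `A` is a Freiman homomorphism of order `k`: whenever
`a₁ + … + a_k = b₁ + … + b_k` with all `aᵢ, bᵢ ∈ A`, also
`φ(a₁) + … + φ(a_k) = φ(b₁) + … + φ(b_k)`. -/
def IsFreimanHomOn {G B : Type*} [AddCommMonoid G] [AddCommMonoid B]
    (k : ℕ) (A : Set G) (φ : G → B) : Prop :=
  ∀ a b : Fin k → G, (∀ i, a i ∈ A) → (∀ i, b i ∈ A) →
    (∑ i, a i) = (∑ i, b i) → (∑ i, φ (a i)) = (∑ i, φ (b i))

/-- Let `Γ'` be a subset of the graph of `φ : (ℤ/2ℤ)^n → (ℤ/4ℤ)^n`, let `W` be a subgroup of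
`(ℤ/4ℤ)^n`, and set `Y = {y : (0,y) ∈ 8Γ' − 8Γ'}`. If `Y ∩ W ⊆ {0}`, then for every shift
`a`, letting `A = {x : (x, φ(x)) ∈ Γ' and φ(x) ∈ a + W}`, the restriction `φ|_A` is a Freiman
homomorphism of order `8`. -/
theorem freiman_from_graph_slices {n : ℕ}
    (φ : (Fin n → ZMod 2) → (Fin n → ZMod 4))
    (Γ' : Set ((Fin n → ZMod 2) × (Fin n → ZMod 4)))
    (hgraph : ∀ p ∈ Γ', p.2 = φ p.1)
    (W : AddSubgroup (Fin n → ZMod 4))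
    (hYW : {y : Fin n → ZMod 4 |
        ((0 : Fin n → ZMod 2), y) ∈ iterSumset 8 Γ' - iterSumset 8 Γ'} ∩
        (W : Set (Fin n → ZMod 4)) ⊆ {0}) :
    ∀ a : Fin n → ZMod 4,
      IsFreimanHomOn 8
        {x : Fin n → ZMod 2 | (x, φ x) ∈ Γ' ∧ ∃ w ∈ W, φ x = a + w} φ := by
  intro a f g hf hg hsum
  set s : Fin n → ZMod 4 := (∑ i, φ (f i)) - (∑ i, φ (g i)) with hs
  have hmem : (((0 : Fin n → ZMod 2), s) : (Fin n → ZMod 2) × (Fin n → ZMod 4))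
      ∈ iterSumset 8 Γ' - iterSumset 8 Γ' := by
    refine Set.mem_sub.2 ⟨(∑ i, f i, ∑ i, φ (f i)), ?_, (∑ i, g i, ∑ i, φ (g i)), ?_, ?_⟩
    · exact ⟨fun i => (f i, φ (f i)), fun i => (hf i).1, by simp [Prod.ext_iff, Prod.fst_sum, Prod.snd_sum]⟩
    · exact ⟨fun i => (g i, φ (g i)), fun i => (hg i).1, by simp [Prod.ext_iff, Prod.fst_sum, Prod.snd_sum]⟩
    · ext <;> simp [hsum, hs]
  have hW : s ∈ W := by
    choose wf hwf hwf' using fun i => (hf i).2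
    choose wg hwg hwg' using fun i => (hg i).2
    have : s = (∑ i, wf i) - (∑ i, wg i) := by
      simp only [hs, hwf', hwg', Finset.sum_add_distrib]
      abel
    rw [this]
    exact sub_mem (AddSubgroup.sum_mem _ fun i _ => hwf i)
      (AddSubgroup.sum_mem _ fun i _ => hwg i)
  have : s = 0 := hYW ⟨hmem, hW⟩
  have := sub_eq_zero.mp this
  exact this
end
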